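/- Let R be a field and x, y ∈ X with [x] ≠ [y] (x and y not tail equivalent). Then there is no R-linear isomorphism U : ℙ_{[x]} → ℙ_{[y]} intertwining the operators P_{Z_μ} on both spaces (i.e., satisfying U ∘ P_{Z_μ} = P_{Z_μ} ∘ U for all finite words μ). -/

import Mathlib

/-- The iterated shift: `shiftN x n = σⁿ(x)`. -/
def shiftN {A : Type*} (x : ℕ → A) (n : ℕ) : ℕ → A := fun k => x (k + n)

/-- Tail equivalence: `x ∼ y` iff `σⁿ(x) = σᵐ(y)` for some `n, m ∈ ℕ`. -/
def tailEq {A : Type*} (x y : ℕ → A) : Prop := ∃ n m : ℕ, shiftN x n = shiftN y m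

/-- Concatenation of a finite word with an infinite sequence. -/
def wcat {A : Type*} (w : List A) (x : ℕ → A) : ℕ → A :=
  fun n => if h : n < w.length then w.get ⟨n, h⟩ else x (n - w.length)

/-- The language of `X`: finite words appearing in some element of `X`. -/
def inLang {A : Type*} (X : Set (ℕ → A)) (w : List A) : Prop :=
  ∃ x ∈ X, ∃ k : ℕ, ∀ i (h : i < w.length), w.get ⟨i, h⟩ = x (k + i)

/-- The periodic infinite word `w^∞`. -/
def perInf {A : Type*} (w : List A) (h : w ≠ []) : ℕ → A :=
  fun n => w.get ⟨n % w.length, Nat.mod_lt n (List.length_pos_iff.mpr h)⟩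

/-- `q` is a line path in `X`. -/
def IsLinePath {A : Type*} (X : Set (ℕ → A)) (q : ℕ → A) : Prop :=
  q ∈ X ∧ {x | x ∈ X ∧ x 0 = q 0} = {q} ∧
    ∀ (β : List A) (hβ : β ≠ []) (k : ℕ), shiftN q k ≠ perInf β hβ


variable {A : Type*} (R : Type*) [Field R] (X : Set (ℕ → A))

open Classical

/-- Projection `P_B(δ_x) = [x ∈ B] δ_x` on the free module on `X`. -/
noncomputable def Pop (B : Set (ℕ → A)) : (↥X →₀ R) →ₗ[R] (↥X →₀ R) :=
  Finsupp.lsum R fun x => if (x : ℕ → A) ∈ B then Finsupp.lsingle x else 0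

/-- `S_a(δ_x) = [ax ∈ X] δ_{ax}`. -/
noncomputable def Sop (a : A) : (↥X →₀ R) →ₗ[R] (↥X →₀ R) :=
  Finsupp.lsum R fun x =>
    if h : wcat [a] (x : ℕ → A) ∈ X then Finsupp.lsingle (⟨wcat [a] (x : ℕ → A), h⟩ : ↥X) else 0

/-- `S_a^*(δ_x) = [x₀ = a] δ_{σ(x)}`, needing shift invariance of `X`. -/
noncomputable def SstarOp (hX : ∀ x ∈ X, shiftN x 1 ∈ X) (a : A) :
    (↥X →₀ R) →ₗ[R] (↥X →₀ R) :=
  Finsupp.lsum R fun x =>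
    if (x : ℕ → A) 0 = a then
      Finsupp.lsingle (⟨shiftN (x : ℕ → A) 1, hX x x.2⟩ : ↥X) else 0

/-- `S_α = S_{α₁} ∘ ⋯ ∘ S_{αₙ}`. -/
noncomputable def SwordOp (β : List A) : (↥X →₀ R) →ₗ[R] (↥X →₀ R) :=
  (β.map (Sop R X)).foldr (· ∘ₗ ·) LinearMap.id

/-- `S_α^* = S_{αₙ}^* ∘ ⋯ ∘ S_{α₁}^*`. -/
noncomputable def SstarWordOp (hX : ∀ x ∈ X, shiftN x 1 ∈ X) (α : List A) :
    (↥X →₀ R) →ₗ[R] (↥X →₀ R) :=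
  (α.map (SstarOp R X hX)).foldl (fun acc f => f ∘ₗ acc) LinearMap.id

/-- `C(α,β) = {βx ∈ X : αx ∈ X}`. -/
def Cset (α β : List A) : Set (ℕ → A) :=
  {y | ∃ x : ℕ → A, y = wcat β x ∧ wcat β x ∈ X ∧ wcat α x ∈ X}

/-- The cylinder `Z_μ`. -/
def Zcyl (μ : List A) : Set (ℕ → A) := {y | y ∈ X ∧ ∃ x : ℕ → A, y = wcat μ x}

/-- `ℙ_{[x]}`: the submodule spanned by `{δ_y : y ∼ x}`. -/
noncomputable def Pclass (x : ℕ → A) : Submodule R (↥X →₀ R) :=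
  Submodule.span R {f | ∃ y : ↥X, tailEq (y : ℕ → A) x ∧ f = Finsupp.single y (1 : R)}

/-!
`U δ_x` is a finite combination of points tail equivalent to `y`, so none of them is `x`, and a
long enough prefix `μ` of `x` separates `x` from all of them. Then `P_{Z_μ}` fixes `δ_x` but kills
`U δ_x`, so intertwining forces `U δ_x = 0`, against injectivity.
-/

theorem Pop_eq_filter (B : Set (ℕ → A)) (f : ↥X →₀ R) :
    Pop R X B f = f.filter (fun w : ↥X => (w : ℕ → A) ∈ B) := by
  induction f using Finsupp.induction_linear with
  | zero => rw [map_zero, Finsupp.filter_zero]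
  | add f g hf hg => rw [map_add, hf, hg, Finsupp.filter_add]
  | single w c =>
    by_cases hw : (w : ℕ → A) ∈ B
    · simp [Pop, hw, Finsupp.filter_single_of_pos]
    · simp [Pop, hw, Finsupp.filter_single_of_neg]

theorem Pclass_eq_supported (x : ℕ → A) :
    Pclass R X x = Finsupp.supported R R {w : ↥X | tailEq (w : ℕ → A) x} := by
  rw [Finsupp.supported_eq_span_single, Pclass]
  congr 1
  ext f
  simp [eq_comm]

variable {R X} in
theorem tailEq_of_mem_support_of_mem_Pclass {x : ℕ → A} {f : ↥X →₀ R} (hf : f ∈ Pclass R X x)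
    {w : ↥X} (hw : w ∈ f.support) : tailEq (w : ℕ → A) x := by
  rw [Pclass_eq_supported, Finsupp.mem_supported] at hf
  exact hf hw

theorem mem_Zcyl_range_map_iff (x z : ℕ → A) (k : ℕ) :
    z ∈ Zcyl X ((List.range k).map x) ↔ z ∈ X ∧ ∀ n < k, z n = x n := by
  constructor
  · rintro ⟨hz, z', rfl⟩
    exact ⟨hz, fun n hn => by simp [wcat, hn]⟩
  · rintro ⟨hz, hzx⟩
    refine ⟨hz, shiftN z k, funext fun n => ?_⟩
    by_cases hn : n < k
    · simp [wcat, hn, hzx n hn]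
    · simp only [wcat, List.length_map, List.length_range, dif_neg hn, shiftN]
      congr 1
      omega

theorem exists_prefix_length_separating {ι : Type*} (s : Finset ι) (z : ι → ℕ → A) (x : ℕ → A)
    (h : ∀ i ∈ s, z i ≠ x) : ∃ k, ∀ i ∈ s, ∃ n < k, z i n ≠ x n := by
  choose! n hn using fun i hi => Function.ne_iff.mp (h i hi)
  exact ⟨s.sup n + 1, fun i hi => ⟨n i, Nat.lt_succ_of_le (Finset.le_sup hi), hn i hi⟩⟩

theorem no_equivalence_of_not_tailEq_general {A : Type*} (R : Type*) [Field R]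
    (X : Set (ℕ → A)) (x y : ℕ → A) (hx : x ∈ X)
    (hxy : ¬ tailEq x y) :
    ¬ ∃ U : ↥(Pclass R X x) ≃ₗ[R] ↥(Pclass R X y),
        ∀ (μ : List A) (v w : ↥(Pclass R X x)),
          (v : ↥X →₀ R) = Pop R X (Zcyl X μ) (w : ↥X →₀ R) →
          ((U v : ↥(Pclass R X y)) : ↥X →₀ R)
            = Pop R X (Zcyl X μ) ((U w : ↥(Pclass R X y)) : ↥X →₀ R) := by
  rintro ⟨U, hU⟩
  let δx : ↥(Pclass R X x) := ⟨Finsupp.single ⟨x, hx⟩ 1, by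
    rw [Pclass_eq_supported]; exact Finsupp.single_mem_supported R 1 ⟨0, 0, rfl⟩⟩
  have hsupp : ∀ w ∈ (U δx : ↥X →₀ R).support, (w : ℕ → A) ≠ x := by
    rintro w hw rfl
    exact hxy (tailEq_of_mem_support_of_mem_Pclass (U δx).2 hw)
  obtain ⟨k, hk⟩ := exists_prefix_length_separating _ (fun w : ↥X => (w : ℕ → A)) x hsupp
  set μ := (List.range k).map x
  have hδx : (δx : ↥X →₀ R) = Pop R X (Zcyl X μ) δx := by
    rw [Pop_eq_filter, Finsupp.filter_single_of_pos]
    exact (mem_Zcyl_range_map_iff X x x k).mpr ⟨hx, fun _ _ => rfl⟩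
  have hUδx : Pop R X (Zcyl X μ) (U δx) = 0 := by
    rw [Pop_eq_filter, Finsupp.filter_eq_zero_iff]
    intro w hw
    by_contra hw0
    obtain ⟨n, hn, hne⟩ := hk w (Finsupp.mem_support_iff.mpr hw0)
    exact hne (((mem_Zcyl_range_map_iff X x w k).mp hw).2 n hn)
  have : U δx = 0 := Subtype.ext ((hU μ δx δx hδx).trans hUδx)
  exact one_ne_zero (Finsupp.single_eq_zero.mp (congrArg Subtype.val (U.map_eq_zero_iff.mp this)))

/-- if `x` and `y` are not tail equivalent, there is no linear
isomorphism `ℙ_{[x]} ≃ ℙ_{[y]}` intertwining the cylinder projections. -/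
theorem no_equivalence_of_not_tailEq {A : Type*} (R : Type*) [Field R]
    (X : Set (ℕ → A)) (x y : ℕ → A) (hx : x ∈ X) (hy : y ∈ X)
    (hxy : ¬ tailEq x y) :
    ¬ ∃ U : ↥(Pclass R X x) ≃ₗ[R] ↥(Pclass R X y),
        ∀ (μ : List A) (v w : ↥(Pclass R X x)),
          (v : ↥X →₀ R) = Pop R X (Zcyl X μ) (w : ↥X →₀ R) →
          ((U v : ↥(Pclass R X y)) : ↥X →₀ R)
            = Pop R X (Zcyl X μ) ((U w : ↥(Pclass R X y)) : ↥X →₀ R) :=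
  no_equivalence_of_not_tailEq_general R X x y hx hxy
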